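/- arXiv:1611.08811 — 2 statements merged into one kernel-verified Lean document; each statement's English description precedes it below -/
import Mathlib

section
/- Let U and V be independent random variables on a probability space, each distributed according to the exponential distribution with rate 1. Then for every real θ, the probability P(10·log₁₀(U/V) ≤ θ) equals 1/(1 + 10^(−θ/10)). That is, the random variable Θᵣ = 10·log₁₀(U/V) has cumulative distribution function F_{Θᵣ}(θ) = 1/(1 + 10^(−θ/10)). -/
/-!
On the almost sure event `{U > 0, V > 0}` the event in question is `{U ≤ c V}` with
`c = 10 ^ (θ / 10)`. Slicing at `U = u` gives `P(V ≥ u / c) = exp (-u / c)`, so the probability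
is the Laplace transform `E[exp (-U / c)] = 1 / (1 + 1 / c)` of an exponential variable.
-/

open MeasureTheory ProbabilityTheory Real Set

namespace ProbabilityTheory

variable {r : ℝ}

instance : NullSingletonClass (expMeasure r) :=
  inferInstanceAs (NullSingletonClass (volume.withDensity (gammaPDF 1 r)))

instance : SFinite (expMeasure r) :=
  inferInstanceAs (SFinite (volume.withDensity (gammaPDF 1 r)))

lemma expMeasure_Iic (hr : 0 < r) {x : ℝ} (hx : 0 ≤ x) :
    expMeasure r (Iic x) = ENNReal.ofReal (1 - exp (-(r * x))) := by
  have := isProbabilityMeasure_expMeasure hr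
  rw [← ofReal_cdf, cdf_expMeasure_eq hr, if_pos hx]

lemma expMeasure_Iic_zero (hr : 0 < r) : expMeasure r (Iic 0) = 0 := by
  simp [expMeasure_Iic hr le_rfl]

lemma expMeasure_Ici (hr : 0 < r) {x : ℝ} (hx : 0 ≤ x) :
    expMeasure r (Ici x) = ENNReal.ofReal (exp (-(r * x))) := by
  have := isProbabilityMeasure_expMeasure hr
  have h : 0 ≤ 1 - exp (-(r * x)) := by
    simpa using exp_le_one_iff.mpr (neg_nonpos.mpr (mul_nonneg hr.le hx))
  rw [← compl_Iio, prob_compl_eq_one_sub measurableSet_Iio, measure_congr Iio_ae_eq_Iic,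
    expMeasure_Iic hr hx, ← ENNReal.ofReal_one, ← ENNReal.ofReal_sub _ h, sub_sub_cancel]

lemma ae_pos_expMeasure (hr : 0 < r) : ∀ᵐ x ∂expMeasure r, 0 < x := by
  rw [ae_iff]
  simp only [not_lt]
  exact expMeasure_Iic_zero hr

lemma lintegral_exp_neg_mul_expMeasure (hr : 0 < r) {s : ℝ} (hs : -r < s) :
    ∫⁻ x, ENNReal.ofReal (exp (-(s * x))) ∂expMeasure r = ENNReal.ofReal (r / (r + s)) := by
  have hpdf : ∀ x, exponentialPDF r x * ENNReal.ofReal (exp (-(s * x)))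
      = (Ici 0).indicator (fun x => ENNReal.ofReal (r * exp (-(r + s) * x))) x := by
    intro x
    rcases lt_or_ge x 0 with hx | hx
    · rw [exponentialPDF_of_neg hx, indicator_of_notMem (notMem_Ici.mpr hx), zero_mul]
    · rw [exponentialPDF_of_nonneg hx, indicator_of_mem (mem_Ici.mpr hx),
        ← ENNReal.ofReal_mul (by positivity), mul_assoc, ← exp_add]
      ring_nf
  have hint : IntegrableOn (fun x => r * exp (-(r + s) * x)) (Ioi 0) :=
    (exp_neg_integrableOn_Ioi 0 (by linarith)).const_mul r
  change ∫⁻ x, _ ∂(volume.withDensity (exponentialPDF r)) = _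
  rw [lintegral_withDensity_eq_lintegral_mul _ (f := exponentialPDF r)
    (measurable_exponentialPDFReal r).ennreal_ofReal (by fun_prop)]
  simp only [Pi.mul_apply, hpdf]
  rw [lintegral_indicator measurableSet_Ici, ← Measure.restrict_congr_set Ioi_ae_eq_Ici,
    ← ofReal_integral_eq_lintegral_ofReal hint (ae_of_all _ fun x => by positivity),
    integral_const_mul, integral_exp_mul_Ioi (by linarith), mul_zero, exp_zero,
    neg_div_neg_eq, mul_one_div]

lemma expMeasure_prod_setOf_fst_le_mul_snd {a b c : ℝ} (ha : 0 < a) (hb : 0 < b) (hc : 0 < c) :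
    (expMeasure a).prod (expMeasure b) {p | p.1 ≤ c * p.2}
      = ENNReal.ofReal (a / (a + b / c)) := by
  have hslice : ∀ᵐ u ∂expMeasure a,
      expMeasure b (Prod.mk u ⁻¹' {p | p.1 ≤ c * p.2})
        = ENNReal.ofReal (exp (-(b / c * u))) := by
    filter_upwards [ae_pos_expMeasure ha] with u hu
    have : Prod.mk u ⁻¹' {p : ℝ × ℝ | p.1 ≤ c * p.2} = Ici (u / c) := by
      ext v
      simp [div_le_iff₀ hc, mul_comm]
    rw [this, expMeasure_Ici hb (by positivity)]
    ring_nf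
  rw [Measure.prod_apply (measurableSet_le measurable_fst (measurable_snd.const_mul c)),
    lintegral_congr_ae hslice, lintegral_exp_neg_mul_expMeasure ha (by linarith [div_pos hb hc])]

end ProbabilityTheory

lemma Real.mul_logb_div_le_iff {b k x y θ : ℝ} (hb : 1 < b) (hk : 0 < k) (hx : 0 < x)
    (hy : 0 < y) : k * logb b (x / y) ≤ θ ↔ x ≤ b ^ (θ / k) * y := by
  rw [← le_div_iff₀' hk, logb_le_iff_le_rpow hb (div_pos hx hy), div_le_iff₀ hy]

/-- If `U` and `V` are independent rate-1 exponential random variables, then for every real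
`θ` we have `P(10·log₁₀(U/V) ≤ θ) = 1/(1 + 10^(−θ/10))`. -/
theorem stmt_1 {Ω : Type*} [MeasureSpace Ω] [IsProbabilityMeasure (ℙ : Measure Ω)]
    (U V : Ω → ℝ) (hUm : Measurable U) (hVm : Measurable V)
    (hIndep : IndepFun U V ℙ)
    (hU : Measure.map U ℙ = expMeasure 1) (hV : Measure.map V ℙ = expMeasure 1)
    (θ : ℝ) :
    ℙ {ω | 10 * Real.logb 10 (U ω / V ω) ≤ θ}
      = ENNReal.ofReal (1 / (1 + (10 : ℝ) ^ (-θ / 10))) := by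
  set c : ℝ := 10 ^ (θ / 10)
  have hc : 0 < c := by positivity
  have hUpos : ∀ᵐ ω, 0 < U ω :=
    ae_of_ae_map hUm.aemeasurable (hU ▸ ae_pos_expMeasure one_pos)
  have hVpos : ∀ᵐ ω, 0 < V ω :=
    ae_of_ae_map hVm.aemeasurable (hV ▸ ae_pos_expMeasure one_pos)
  have hevent : {ω | 10 * logb 10 (U ω / V ω) ≤ θ}
      =ᵐ[ℙ] (fun ω => (U ω, V ω)) ⁻¹' {p | p.1 ≤ c * p.2} := by
    filter_upwards [hUpos, hVpos] with ω hu hv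
    exact propext (mul_logb_div_le_iff (by norm_num) (by norm_num) hu hv)
  have hlaw : Measure.map (fun ω => (U ω, V ω)) ℙ = (expMeasure 1).prod (expMeasure 1) := by
    simpa only [hU, hV] using hIndep.map_prod_eq_prod_map_map hUm.aemeasurable hVm.aemeasurable
  rw [measure_congr hevent, ← Measure.map_apply (hUm.prodMk hVm)
    (measurableSet_le measurable_fst (measurable_snd.const_mul c)), hlaw,
    expMeasure_prod_setOf_fst_le_mul_snd one_pos one_pos hc, neg_div, rpow_neg (by norm_num)]
  simp [c]
end

section
/- (Appendix C, intersecting case) Let M and S be points of the Euclidean plane ℝ² at distance d = dist(M,S), and let 0 < ξ ≤ r be radii with ξ ≤ d and r − ξ ≤ d ≤ r + ξ. Set φ₁ = arccos((ξ² + d² − r²)/(2ξd)) and φ₂ = arccos((r² + d² − ξ²)/(2rd)). Then the Lebesgue area of the part of the disk of radius r centered at S lying outside the disk of radius ξ centered at M is volume( closedBall(S, r) \ closedBall(M, ξ) ) = (π − φ₂)·r² − φ₁·ξ² + ξ·d·sin φ₁. -/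
/-!
Put `M` at the origin and `S` at `(d, 0)` by an isometric, hence volume-preserving, change of
coordinates. The vertical slice at abscissa `x` of `closedBall S r \ closedBall M ξ` then has length
`2√(r² - (x - d)²) - 2√(ξ² - x²)` whenever this is nonnegative, that is for `x` between the common
chord `x = a`, `a = (ξ² + d² - r²) / (2d)`, and `d + r`. Integrating, the area is the difference of
the circular segments `r² arccos((a - d)/r) - (a - d)√(r² - (a - d)²)` and
`ξ² arccos(a/ξ) - a√(ξ² - a²)`, and `√(ξ² - a²) = ξ sin φ₁` is the half-length of the chord.
-/

open MeasureTheory Real Module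

theorem hasDerivAt_mul_sqrt_sq_sub_sq_sub_arccos {R x : ℝ} (hR : 0 < R) (hx₁ : -R < x)
    (hx₂ : x < R) :
    HasDerivAt (fun x => x * √(R ^ 2 - x ^ 2) - R ^ 2 * arccos (x / R)) (2 * √(R ^ 2 - x ^ 2))
      x := by
  have hpos : 0 < R ^ 2 - x ^ 2 := by nlinarith
  have hsqrt : HasDerivAt (fun x => √(R ^ 2 - x ^ 2)) (-(2 * x) / (2 * √(R ^ 2 - x ^ 2))) x := by
    simpa using ((hasDerivAt_pow 2 x).const_sub (R ^ 2)).sqrt hpos.ne'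
  have harccos : HasDerivAt (fun x => arccos (x / R)) (-(1 / √(1 - (x / R) ^ 2)) * (1 / R)) x :=
    (hasDerivAt_arccos (by rw [ne_eq, div_eq_iff hR.ne']; linarith)
      (by rw [ne_eq, div_eq_iff hR.ne']; linarith)).comp x
      (by simpa using (hasDerivAt_id x).div_const R)
  refine (((hasDerivAt_id' x).mul hsqrt).sub (harccos.const_mul (R ^ 2))).congr_deriv ?_
  have hscale : √(1 - (x / R) ^ 2) = √(R ^ 2 - x ^ 2) / R := by
    rw [show 1 - (x / R) ^ 2 = (R ^ 2 - x ^ 2) / R ^ 2 by field_simp, sqrt_div hpos.le,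
      sqrt_sq hR.le]
  have hsq := sq_sqrt hpos.le
  have hne := (sqrt_pos.2 hpos).ne'
  rw [hscale]
  field_simp
  linear_combination -hsq

theorem integral_two_mul_sqrt_sq_sub_sq {R c e : ℝ} (hR : 0 < R) (hc₁ : -R ≤ c) (hc₂ : c ≤ R)
    (he : R ≤ e) :
    ∫ x in c..e, 2 * √(R ^ 2 - x ^ 2) = R ^ 2 * arccos (c / R) - c * √(R ^ 2 - c ^ 2) := by
  have hcont : Continuous fun x : ℝ => 2 * √(R ^ 2 - x ^ 2) := by fun_prop
  have hvanish : ∫ x in R..e, 2 * √(R ^ 2 - x ^ 2) = 0 := by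
    refine (intervalIntegral.integral_congr fun x hx => ?_).trans intervalIntegral.integral_zero
    rw [Set.uIcc_of_le he] at hx
    simp only [sqrt_eq_zero'.2 (by nlinarith [hx.1] : R ^ 2 - x ^ 2 ≤ 0), mul_zero]
  rw [← intervalIntegral.integral_add_adjacent_intervals (hcont.intervalIntegrable c R)
    (hcont.intervalIntegrable R e), hvanish, add_zero,
    intervalIntegral.integral_eq_sub_of_hasDerivAt_of_le hc₂ (by fun_prop)
      (fun x hx => hasDerivAt_mul_sqrt_sq_sub_sq_sub_arccos hR (by linarith [hx.1]) hx.2)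
      (hcont.intervalIntegrable c R)]
  simp [div_self hR.ne']

theorem volume_setOf_sq_le (A : ℝ) : volume {y : ℝ | y ^ 2 ≤ A} = ENNReal.ofReal (2 * √A) := by
  rcases le_or_gt 0 A with hA | hA
  · rw [show {y : ℝ | y ^ 2 ≤ A} = Set.Icc (-√A) √A by ext y; exact sq_le hA, volume_Icc]
    ring_nf
  · rw [show {y : ℝ | y ^ 2 ≤ A} = ∅ by ext y; simpa using hA.trans_le (sq_nonneg y),
      sqrt_eq_zero'.2 hA.le]
    simp

theorem volume_setOf_sq_le_sdiff (A B : ℝ) :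
    volume ({y : ℝ | y ^ 2 ≤ A} \ {y | y ^ 2 ≤ B}) = ENNReal.ofReal (2 * √A - 2 * √B) := by
  rcases le_total B A with hBA | hAB
  · have hsub : {y : ℝ | y ^ 2 ≤ B} ⊆ {y | y ^ 2 ≤ A} := fun y hy => le_trans hy hBA
    rw [measure_sdiff hsub (measurableSet_le (by fun_prop) measurable_const).nullMeasurableSet
      (by rw [volume_setOf_sq_le]; exact ENNReal.ofReal_ne_top), volume_setOf_sq_le,
      volume_setOf_sq_le, ENNReal.ofReal_sub _ (by positivity)]
  · have hsub : {y : ℝ | y ^ 2 ≤ A} ⊆ {y | y ^ 2 ≤ B} := fun y hy => le_trans hy hAB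
    rw [Set.sdiff_eq_empty.2 hsub, measure_empty,
      ENNReal.ofReal_of_nonpos (by linarith [sqrt_le_sqrt hAB])]

theorem volume_setOf_sq_le_sdiff_setOf_sq_le {A B : ℝ → ℝ} (hA : Measurable A)
    (hB : Measurable B) :
    volume ({p : ℝ × ℝ | p.2 ^ 2 ≤ A p.1} \ {p | p.2 ^ 2 ≤ B p.1})
      = ∫⁻ x, ENNReal.ofReal (2 * √(A x) - 2 * √(B x)) := by
  rw [Measure.volume_eq_prod, Measure.prod_apply]
  · exact lintegral_congr fun x => volume_setOf_sq_le_sdiff (A x) (B x)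
  · exact (measurableSet_le (by fun_prop) (hA.comp measurable_fst)).diff
      (measurableSet_le (by fun_prop) (hB.comp measurable_fst))

/-- The common chord of the circles `x² + y² = ξ²` and `(x - d)² + y² = r²` lies on the line
`x = chordAbscissa ξ r d`. -/
noncomputable def chordAbscissa (ξ r d : ℝ) : ℝ := (ξ ^ 2 + d ^ 2 - r ^ 2) / (2 * d)

section Lens

variable {ξ r d : ℝ}

theorem two_mul_mul_chordAbscissa (hd : d ≠ 0) :
    2 * d * chordAbscissa ξ r d = ξ ^ 2 + d ^ 2 - r ^ 2 := by
  rw [chordAbscissa]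
  field_simp

theorem sub_eq_two_mul_mul_sub_chordAbscissa (hd : d ≠ 0) (x : ℝ) :
    (r ^ 2 - (x - d) ^ 2) - (ξ ^ 2 - x ^ 2) = 2 * d * (x - chordAbscissa ξ r d) := by
  linear_combination two_mul_mul_chordAbscissa (ξ := ξ) (r := r) hd

theorem abs_chordAbscissa_le (hd : 0 < d) (h₁ : |r - ξ| ≤ d) (h₂ : d ≤ r + ξ) :
    |chordAbscissa ξ r d| ≤ ξ := by
  obtain ⟨h₁, h₁'⟩ := abs_le.1 h₁
  have ha := two_mul_mul_chordAbscissa (ξ := ξ) (r := r) hd.ne'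
  refine abs_le.2 ⟨?_, ?_⟩
  · nlinarith [mul_nonneg (by linarith : 0 ≤ d + ξ - r) (by linarith : 0 ≤ d + ξ + r)]
  · nlinarith [mul_nonneg (by linarith : 0 ≤ r - d + ξ) (by linarith : 0 ≤ r + d - ξ)]

theorem abs_chordAbscissa_sub_le (hd : 0 < d) (h₁ : |r - ξ| ≤ d) (h₂ : d ≤ r + ξ) :
    |chordAbscissa ξ r d - d| ≤ r := by
  obtain ⟨h₁, h₁'⟩ := abs_le.1 h₁
  have ha := two_mul_mul_chordAbscissa (ξ := ξ) (r := r) hd.ne'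
  refine abs_le.2 ⟨?_, ?_⟩
  · nlinarith [mul_nonneg (by linarith : 0 ≤ ξ - d + r) (by linarith : 0 ≤ ξ + d - r)]
  · nlinarith [mul_nonneg (by linarith : 0 ≤ d + r - ξ) (by linarith : 0 ≤ d + r + ξ)]

theorem lintegral_ofReal_two_mul_sqrt_sub (hr : 0 ≤ r) (hd : 0 < d)
    (had : chordAbscissa ξ r d ≤ d + r) :
    ∫⁻ x, ENNReal.ofReal (2 * √(r ^ 2 - (x - d) ^ 2) - 2 * √(ξ ^ 2 - x ^ 2))
      = ENNReal.ofReal (∫ x in chordAbscissa ξ r d..d + r,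
          (2 * √(r ^ 2 - (x - d) ^ 2) - 2 * √(ξ ^ 2 - x ^ 2))) := by
  set a := chordAbscissa ξ r d
  set g : ℝ → ℝ := fun x => 2 * √(r ^ 2 - (x - d) ^ 2) - 2 * √(ξ ^ 2 - x ^ 2)
  have hg_nonneg : ∀ x ∈ Set.Icc a (d + r), 0 ≤ g x := fun x hx => by
    have hle : ξ ^ 2 - x ^ 2 ≤ r ^ 2 - (x - d) ^ 2 := by
      nlinarith [sub_eq_two_mul_mul_sub_chordAbscissa (ξ := ξ) (r := r) hd.ne' x, hx.1]
    simp only [g]; linarith [sqrt_le_sqrt hle]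
  have hg_nonpos : ∀ x ∉ Set.Icc a (d + r), g x ≤ 0 := fun x hx => by
    rcases not_and_or.1 hx with hxa | hxdr
    · have hle : r ^ 2 - (x - d) ^ 2 ≤ ξ ^ 2 - x ^ 2 := by
        nlinarith [sub_eq_two_mul_mul_sub_chordAbscissa (ξ := ξ) (r := r) hd.ne' x, not_le.1 hxa]
      simp only [g]; linarith [sqrt_le_sqrt hle]
    · have : √(r ^ 2 - (x - d) ^ 2) = 0 := sqrt_eq_zero'.2 (by nlinarith [not_le.1 hxdr])
      simp only [g, this]; linarith [sqrt_nonneg (ξ ^ 2 - x ^ 2)]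
  have hsupp : (fun x => ENNReal.ofReal (g x)).support ⊆ Set.Icc a (d + r) := fun x hx => by
    by_contra h
    exact hx (ENNReal.ofReal_of_nonpos (hg_nonpos x h))
  rw [← setLIntegral_eq_of_support_subset hsupp, ← ofReal_integral_eq_lintegral_ofReal
      ((by fun_prop : Continuous g).integrableOn_Icc)
      ((ae_restrict_iff' measurableSet_Icc).2 (Filter.Eventually.of_forall hg_nonneg)),
    integral_Icc_eq_integral_Ioc, intervalIntegral.integral_of_le had]

theorem integral_two_mul_sqrt_sub (hξ : 0 < ξ) (hr : 0 < r) (hd : 0 < d) (h₁ : |r - ξ| ≤ d)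
    (h₂ : d ≤ r + ξ) :
    ∫ x in chordAbscissa ξ r d..d + r, (2 * √(r ^ 2 - (x - d) ^ 2) - 2 * √(ξ ^ 2 - x ^ 2))
      = r ^ 2 * arccos ((chordAbscissa ξ r d - d) / r) - ξ ^ 2 * arccos (chordAbscissa ξ r d / ξ)
        + d * √(ξ ^ 2 - chordAbscissa ξ r d ^ 2) := by
  set a := chordAbscissa ξ r d
  obtain ⟨ha₁, ha₂⟩ := abs_le.1 (abs_chordAbscissa_le hd h₁ h₂)
  obtain ⟨hda₁, hda₂⟩ := abs_le.1 (abs_chordAbscissa_sub_le hd h₁ h₂)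
  have hcont₁ : Continuous fun x => 2 * √(r ^ 2 - (x - d) ^ 2) := by fun_prop
  have hcont₂ : Continuous fun x => 2 * √(ξ ^ 2 - x ^ 2) := by fun_prop
  rw [intervalIntegral.integral_sub (hcont₁.intervalIntegrable _ _)
      (hcont₂.intervalIntegrable _ _),
    intervalIntegral.integral_comp_sub_right (fun x => 2 * √(r ^ 2 - x ^ 2)), add_sub_cancel_left,
    integral_two_mul_sqrt_sq_sub_sq hr hda₁ hda₂ le_rfl,
    integral_two_mul_sqrt_sq_sub_sq hξ ha₁ ha₂ (by linarith [(abs_le.1 h₁).1]),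
    show r ^ 2 - (a - d) ^ 2 = ξ ^ 2 - a ^ 2 by
      linear_combination two_mul_mul_chordAbscissa (ξ := ξ) (r := r) hd.ne']
  ring

theorem volume_setOf_sub_sq_add_sq_le_sdiff (hξ : 0 < ξ) (hr : 0 < r) (hd : 0 < d)
    (h₁ : |r - ξ| ≤ d) (h₂ : d ≤ r + ξ) :
    volume ({p : ℝ × ℝ | (p.1 - d) ^ 2 + p.2 ^ 2 ≤ r ^ 2} \ {p | p.1 ^ 2 + p.2 ^ 2 ≤ ξ ^ 2})
      = ENNReal.ofReal ((π - arccos ((r ^ 2 + d ^ 2 - ξ ^ 2) / (2 * r * d))) * r ^ 2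
          - arccos ((ξ ^ 2 + d ^ 2 - r ^ 2) / (2 * ξ * d)) * ξ ^ 2
          + ξ * d * sin (arccos ((ξ ^ 2 + d ^ 2 - r ^ 2) / (2 * ξ * d)))) := by
  have hslices := volume_setOf_sq_le_sdiff_setOf_sq_le (A := fun x => r ^ 2 - (x - d) ^ 2)
    (B := fun x => ξ ^ 2 - x ^ 2) (by fun_prop) (by fun_prop)
  simp_rw [← le_sub_iff_add_le']
  rw [hslices,
    lintegral_ofReal_two_mul_sqrt_sub hr.le hd
      (sub_le_iff_le_add'.1 (abs_le.1 (abs_chordAbscissa_sub_le hd h₁ h₂)).2),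
    integral_two_mul_sqrt_sub hξ hr hd h₁ h₂]
  have hφ₂ : (chordAbscissa ξ r d - d) / r = -((r ^ 2 + d ^ 2 - ξ ^ 2) / (2 * r * d)) := by
    rw [chordAbscissa]; field_simp; ring
  have hφ₁ : chordAbscissa ξ r d / ξ = (ξ ^ 2 + d ^ 2 - r ^ 2) / (2 * ξ * d) := by
    rw [chordAbscissa]; field_simp
  have hchord :
      ξ * sin (arccos (chordAbscissa ξ r d / ξ)) = √(ξ ^ 2 - chordAbscissa ξ r d ^ 2) := by
    rw [sin_arccos, ← sqrt_sq hξ.le, ← sqrt_mul (sq_nonneg ξ), sqrt_sq hξ.le]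
    congr 1
    field_simp
  rw [hφ₂, arccos_neg, ← hφ₁, ← hchord]
  ring_nf

end Lens

theorem exists_orthonormalBasis_apply_eq {F ι : Type*} [NormedAddCommGroup F]
    [InnerProductSpace ℝ F] [FiniteDimensional ℝ F] [Fintype ι]
    (hF : finrank ℝ F = Fintype.card ι) (i : ι) {u : F} (hu : ‖u‖ = 1) :
    ∃ b : OrthonormalBasis ι ℝ F, b i = u := by
  have : Orthonormal ℝ (({i} : Set ι).domRestrict fun _ => u) :=
    ⟨fun _ => hu, fun j k hjk => (hjk (Subsingleton.elim j k)).elim⟩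
  obtain ⟨b, hb⟩ := this.exists_orthonormalBasis_extension_of_card_eq hF
  exact ⟨b, hb i rfl⟩

theorem exists_measurePreserving_frame {F : Type*} [NormedAddCommGroup F] [InnerProductSpace ℝ F]
    [FiniteDimensional ℝ F] [MeasurableSpace F] [BorelSpace F] (hF : finrank ℝ F = 2) {M S : F}
    (hMS : M ≠ S) :
    ∃ Φ : ℝ × ℝ → F, MeasurePreserving Φ ∧ Φ (0, 0) = M ∧ Φ (dist M S, 0) = S ∧
      ∀ p q, dist (Φ p) (Φ q) ^ 2 = (p.1 - q.1) ^ 2 + (p.2 - q.2) ^ 2 := by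
  have hd : 0 < dist M S := dist_pos.2 hMS
  obtain ⟨b, hb⟩ := exists_orthonormalBasis_apply_eq (hF.trans (Fintype.card_fin 2).symm) 0
    (u := (dist M S)⁻¹ • (S - M)) (by
      rw [norm_smul, ← dist_eq_norm', norm_inv, norm_of_nonneg hd.le, inv_mul_cancel₀ hd.ne'])
  refine ⟨fun p => M + b.repr.symm (WithLp.toLp 2 ![p.1, p.2]),
    (measurePreserving_add_left volume M).comp (b.measurePreserving_repr_symm.comp
      ((PiLp.volume_preserving_toLp (Fin 2)).comp (volume_preserving_finTwoArrow ℝ).symm)),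
    by simp, ?_, fun p q => ?_⟩
  · simp [← b.sum_repr_symm, hb, smul_inv_smul₀ hd.ne']
  · rw [dist_add_left, LinearIsometryEquiv.dist_map, EuclideanSpace.dist_sq_eq]
    simp [Fin.sum_univ_two, Real.dist_eq, sq_abs]

/-- Appendix C, intersecting case: with `d = dist(M,S)`, radii `0 < ξ ≤ r`, `ξ ≤ d` and
`r − ξ ≤ d ≤ r + ξ`, the area of the disk of radius `r` around `S` outside the disk of radius
`ξ` around `M` is `(π − φ₂)r² − φ₁ξ² + ξ·d·sin φ₁` where
`φ₁ = arccos((ξ² + d² − r²)/(2ξd))` and `φ₂ = arccos((r² + d² − ξ²)/(2rd))`. -/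
theorem stmt_15 (M S : EuclideanSpace ℝ (Fin 2)) (ξ r : ℝ)
    (hξ : 0 < ξ) (hξr : ξ ≤ r) (h1 : ξ ≤ dist M S)
    (h2 : r - ξ ≤ dist M S) (h3 : dist M S ≤ r + ξ) :
    volume (Metric.closedBall S r \ Metric.closedBall M ξ)
      = ENNReal.ofReal
          ((Real.pi - Real.arccos ((r ^ 2 + dist M S ^ 2 - ξ ^ 2) / (2 * r * dist M S))) * r ^ 2
            - Real.arccos ((ξ ^ 2 + dist M S ^ 2 - r ^ 2) / (2 * ξ * dist M S)) * ξ ^ 2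
            + ξ * dist M S
              * Real.sin (Real.arccos ((ξ ^ 2 + dist M S ^ 2 - r ^ 2) / (2 * ξ * dist M S)))) := by
  have hr : 0 < r := hξ.trans_le hξr
  have hd : 0 < dist M S := hξ.trans_le h1
  obtain ⟨Φ, hΦ, hΦM, hΦS, hdist⟩ :=
    exists_measurePreserving_frame finrank_euclideanSpace_fin (dist_pos.1 hd)
  set d := dist M S
  have hpre : Φ ⁻¹' (Metric.closedBall S r \ Metric.closedBall M ξ)
      = {p | (p.1 - d) ^ 2 + p.2 ^ 2 ≤ r ^ 2} \ {p | p.1 ^ 2 + p.2 ^ 2 ≤ ξ ^ 2} := by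
    ext p
    rw [Set.mem_preimage, Set.mem_sdiff, Metric.mem_closedBall, Metric.mem_closedBall,
      ← sq_le_sq₀ dist_nonneg hr.le, ← sq_le_sq₀ dist_nonneg hξ.le, ← hΦS, ← hΦM, hdist, hdist]
    simp
  rw [← hΦ.measure_preimage
      (measurableSet_closedBall.diff measurableSet_closedBall).nullMeasurableSet, hpre, volume_setOf_sub_sq_add_sq_le_sdiff hξ hr hd (abs_sub_le_iff.2 ⟨h2, by linarith⟩) h3]
end
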